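/- For the chessboard matrix A^ξ : ℕ×ℕ → 𝔻 with A^ξ(n,k) = 1 if n+k is even and ξ otherwise (0 ≤ ξ ≤ 1), the noise numbers satisfy s^ξ_{2k+1}(l) = (π^(l−2)/3^(l/2−1))(π²/3 − β_{2k} − ξ^l α_{2k+1} − ξ^l π²/8 − π²/24) and s^ξ_{2k}(l) = (π^(l−2)/3^(l/2−1))(π²/3 − β_{2k} − ξ^l α_{2k−1} − ξ^l π²/8 − π²/24), where β_{2k} = Σ_{m=1}^k 1/(2m)² and α_{2k+1} = Σ_{m=0}^k 1/(2m+1)². -/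

import Mathlib

open Real

/-- The chessboard matrix `A^ξ : ℕ×ℕ → 𝔻`. -/
noncomputable def chessA (ξ : ℝ) (n k : ℕ) : ℂ :=
  if Even (n + k) then 1 else (ξ : ℂ)

/-- The noise number `s_n^A(l)` of a matrix `A : ℕ×ℕ → 𝔻`. -/
noncomputable def sN (A : ℕ → ℕ → ℂ) (n l : ℕ) : ℝ :=
  (π / Real.sqrt 3) ^ l *
    (1 - 3 / π ^ 2 *
      ∑' k : ℕ, (if k = n then (0:ℝ) else ‖A n k‖ ^ l / ((k : ℝ) - n) ^ 2))

/-- `β_{2k} = ∑_{m=1}^k 1/(2m)²`. -/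
noncomputable def βe (k : ℕ) : ℝ := ∑ m ∈ Finset.Icc 1 k, 1 / ((2 * m : ℝ)) ^ 2

/-- `α_{2k+1} = ∑_{m=0}^k 1/(2m+1)²`. -/
noncomputable def αo (k : ℕ) : ℝ := ∑ m ∈ Finset.range (k + 1), 1 / ((2 * m + 1 : ℝ)) ^ 2

/-!
Along row `n` of `A^ξ` the entry depends only on the parity of the distance `d = |k - n|`, so the
series in `s_n(l)` is `∑_k w(|k - n|)` with `w(d) = 1/d²` for even `d` and `ξ^l/d²` for odd `d`.
The columns `k ≥ n` meet every distance once and contribute `π²/24 + ξ^l π²/8`, the even and odd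
parts of `ζ(2) = π²/6`; the columns `k < n` contribute `w(1) + ⋯ + w(n)`, which splits into
`β_{2k}` and `ξ^l` times a partial sum of `α`.
-/

open Finset

theorem hasSum_one_div_two_mul_sq :
    HasSum (fun m : ℕ => 1 / (2 * m : ℝ) ^ 2) (π ^ 2 / 24) := by
  have hf : (fun m : ℕ => 1 / (2 * m : ℝ) ^ 2) = fun m : ℕ => 1 / 4 * (1 / (m : ℝ) ^ 2) := by
    ext m; ring
  rw [hf, show π ^ 2 / 24 = 1 / 4 * (π ^ 2 / 6) by ring]
  exact hasSum_zeta_two.mul_left _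

theorem hasSum_one_div_two_mul_add_one_sq :
    HasSum (fun m : ℕ => 1 / (2 * m + 1 : ℝ) ^ 2) (π ^ 2 / 8) := by
  have hinj : Function.Injective (fun m : ℕ => 2 * m + 1) := fun a b h => by
    simp only at h; omega
  have hodd : Summable (fun m : ℕ => 1 / (2 * m + 1 : ℝ) ^ 2) := by
    simpa [Function.comp_def] using hasSum_zeta_two.summable.comp_injective hinj
  have hsplit : HasSum (fun n : ℕ => 1 / (n : ℝ) ^ 2)
      (π ^ 2 / 24 + ∑' m : ℕ, 1 / (2 * m + 1 : ℝ) ^ 2) :=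
    .even_add_odd (by simpa using hasSum_one_div_two_mul_sq) (by simpa using hodd.hasSum)
  have hzeta := hasSum_zeta_two.unique hsplit
  exact (show ∑' m : ℕ, 1 / (2 * m + 1 : ℝ) ^ 2 = π ^ 2 / 8 by linarith) ▸ hodd.hasSum

/-- `|A^ξ(n,k)|^l / (k - n)²` with `c = ξ^l` and `d = |k - n|`; it vanishes at `d = 0` because
`1 / 0 = 0`. -/
noncomputable def parityWeight (c : ℝ) (d : ℕ) : ℝ := (if Even d then 1 else c) / (d : ℝ) ^ 2

theorem hasSum_parityWeight (c : ℝ) :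
    HasSum (parityWeight c) (π ^ 2 / 24 + c * (π ^ 2 / 8)) := by
  refine .even_add_odd ?_ ?_
  · simpa [parityWeight] using hasSum_one_div_two_mul_sq
  · simpa [parityWeight, div_eq_mul_inv] using hasSum_one_div_two_mul_add_one_sq.mul_left c

theorem HasSum.comp_natAbs_sub {G : Type*} [AddCommGroup G] [TopologicalSpace G]
    [IsTopologicalAddGroup G] {f : ℕ → G} {a : G} (hf : HasSum f a) (n : ℕ) :
    HasSum (fun k : ℕ => f ((k : ℤ) - n).natAbs) (∑ j ∈ range n, f (j + 1) + a) := by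
  rw [← hasSum_nat_add_iff' n]
  have hhead : ∑ i ∈ range n, f ((i : ℤ) - n).natAbs = ∑ j ∈ range n, f (j + 1) := by
    rw [← sum_range_reflect]
    refine sum_congr rfl fun i hi => congrArg f ?_
    have hin := mem_range.1 hi
    omega
  simpa [hhead] using hf

theorem chessA_summand_eq {ξ : ℝ} (hξ : 0 ≤ ξ) (n l k : ℕ) :
    (if k = n then 0 else ‖chessA ξ n k‖ ^ l / ((k : ℝ) - n) ^ 2) =
      parityWeight (ξ ^ l) ((k : ℤ) - n).natAbs := by
  split_ifs with hkn
  · simp [hkn, parityWeight]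
  have hdist : ((k : ℝ) - n) ^ 2 = ((((k : ℤ) - n).natAbs : ℕ) : ℝ) ^ 2 := by
    rw [Nat.cast_natAbs, Int.cast_abs, sq_abs]
    push_cast; ring
  have hparity : Even (n + k) ↔ Even ((k : ℤ) - n).natAbs := by
    rw [Int.natAbs_even, Int.even_sub, Nat.even_add, Int.even_coe_nat, Int.even_coe_nat]
    exact Iff.comm
  rw [hdist, parityWeight, chessA]
  split_ifs with h₁ h₂ h₂
  · simp
  · exact absurd (hparity.1 h₁) h₂
  · exact absurd (hparity.2 h₂) h₁
  · rw [Complex.norm_real, Real.norm_of_nonneg hξ]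

theorem pi_div_sqrt_three_pow_mul (l : ℕ) (S : ℝ) :
    (π / √3) ^ l * (1 - 3 / π ^ 2 * S) =
      π ^ ((l : ℝ) - 2) / 3 ^ ((l : ℝ) / 2 - 1) * (π ^ 2 / 3 - S) := by
  have hsqrt : √3 ^ l = (3 : ℝ) ^ ((l : ℝ) / 2) := by
    rw [Real.sqrt_eq_rpow, ← Real.rpow_natCast, ← Real.rpow_mul (by norm_num)]
    ring_nf
  rw [Real.rpow_sub pi_pos, Real.rpow_sub (by norm_num), Real.rpow_natCast, Real.rpow_two,
    Real.rpow_one, div_pow, hsqrt]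
  field_simp

theorem sN_chessA {ξ : ℝ} (hξ : 0 ≤ ξ) (n l : ℕ) :
    sN (chessA ξ) n l = π ^ ((l : ℝ) - 2) / 3 ^ ((l : ℝ) / 2 - 1) *
      (π ^ 2 / 3 - (∑ j ∈ range n, parityWeight (ξ ^ l) (j + 1) +
        (π ^ 2 / 24 + ξ ^ l * (π ^ 2 / 8)))) := by
  rw [sN, funext (chessA_summand_eq hξ n l),
    ((hasSum_parityWeight (ξ ^ l)).comp_natAbs_sub n).tsum_eq, pi_div_sqrt_three_pow_mul]

theorem sum_range_two_mul_parityWeight (c : ℝ) (k : ℕ) :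
    ∑ j ∈ range (2 * k), parityWeight c (j + 1) =
      βe k + c * ∑ m ∈ range k, 1 / (2 * m + 1 : ℝ) ^ 2 := by
  induction k with
  | zero => simp [βe]
  | succ k ih =>
    rw [show 2 * (k + 1) = 2 * k + 1 + 1 by ring, sum_range_succ, sum_range_succ, ih, βe,
      βe, sum_Icc_succ_top (by omega), sum_range_succ]
    simp only [one_div, parityWeight, Nat.not_even_bit1, ↓reduceIte, Nat.cast_add, Nat.cast_mul,
      Nat.cast_ofNat, Nat.cast_one, Nat.even_add_one, not_false_eq_true]
    ring

theorem sum_range_two_mul_add_one_parityWeight (c : ℝ) (k : ℕ) :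
    ∑ j ∈ range (2 * k + 1), parityWeight c (j + 1) = βe k + c * αo k := by
  rw [sum_range_succ, sum_range_two_mul_parityWeight, αo, sum_range_succ]
  simp only [one_div, parityWeight, Nat.not_even_bit1, ↓reduceIte, Nat.cast_add, Nat.cast_mul,
    Nat.cast_ofNat, Nat.cast_one]
  ring

theorem stmt6_general (ξ : ℝ) (hξ0 : 0 ≤ ξ) (k l : ℕ) :
    sN (chessA ξ) (2 * k + 1) l =
      π ^ ((l : ℝ) - 2) / 3 ^ ((l : ℝ) / 2 - 1) *
        (π ^ 2 / 3 - βe k - ξ ^ l * αo k - ξ ^ l * (π ^ 2 / 8) - π ^ 2 / 24) ∧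
    sN (chessA ξ) (2 * k) l =
      π ^ ((l : ℝ) - 2) / 3 ^ ((l : ℝ) / 2 - 1) *
        (π ^ 2 / 3 - βe k -
          ξ ^ l * (∑ m ∈ Finset.range k, 1 / ((2 * m + 1 : ℝ)) ^ 2) -
          ξ ^ l * (π ^ 2 / 8) - π ^ 2 / 24) := by
  constructor
  · rw [sN_chessA hξ0, sum_range_two_mul_add_one_parityWeight]
    ring
  · rw [sN_chessA hξ0, sum_range_two_mul_parityWeight]
    ring

/-- The noise numbers of the chessboard matrices `A^ξ` on `ℕ × ℕ`:
`s^ξ_{2k+1}(l)` and `s^ξ_{2k}(l)` are given by the explicit formulas, where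
`α_{2k-1} = ∑_{m=0}^{k-1} 1/(2m+1)²`. -/
theorem stmt6 (ξ : ℝ) (hξ0 : 0 ≤ ξ) (hξ1 : ξ ≤ 1) (k l : ℕ) :
    sN (chessA ξ) (2 * k + 1) l =
      π ^ ((l : ℝ) - 2) / 3 ^ ((l : ℝ) / 2 - 1) *
        (π ^ 2 / 3 - βe k - ξ ^ l * αo k - ξ ^ l * (π ^ 2 / 8) - π ^ 2 / 24) ∧
    sN (chessA ξ) (2 * k) l =
      π ^ ((l : ℝ) - 2) / 3 ^ ((l : ℝ) / 2 - 1) *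
        (π ^ 2 / 3 - βe k -
          ξ ^ l * (∑ m ∈ Finset.range k, 1 / ((2 * m + 1 : ℝ)) ^ 2) -
          ξ ^ l * (π ^ 2 / 8) - π ^ 2 / 24) :=
  stmt6_general ξ hξ0 k l
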